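/- arXiv:2108.11825 — 8 statements merged into one kernel-verified Lean document; each statement's English description precedes it below -/
import Mathlib

section
/- Let λ ∈ ℝ and let φ : ℝ → ℝ be twice differentiable and satisfy φ''(ρ) + tanh(ρ)·φ'(ρ) + λ·φ(ρ) = 0 for all ρ ∈ ℝ. Define Ψ on (−π/2, π/2) by Ψ(x) = φ(2·artanh(tan(x/2))). Then Ψ''(x) + (λ / cos(x)²)·Ψ(x) = 0 for all x ∈ (−π/2, π/2); moreover, if φ(0) = 0 and φ'(0) = 1, then Ψ(0) = 0 and Ψ'(0) = 1. -/
/-- Real inverse hyperbolic tangent, defined on `(-1, 1)`. -/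
noncomputable def artanh (x : ℝ) : ℝ := Real.log ((1 + x) / (1 - x)) / 2

lemma artanh_hasDerivAt {t : ℝ} (h1 : -1 < t) (h2 : t < 1) :
    HasDerivAt artanh (1 / (1 - t ^ 2)) t := by
  have hp : (0:ℝ) < 1 + t := by linarith
  have hm : (0:ℝ) < 1 - t := by linarith
  have hsq : (1:ℝ) - t ^ 2 ≠ 0 := by nlinarith
  have hf : HasDerivAt (fun y : ℝ => (1 + y) / (1 - y)) (2 / (1 - t) ^ 2) t := by
    have := (((hasDerivAt_const t (1:ℝ)).add (hasDerivAt_id t)).div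
      ((hasDerivAt_const t (1:ℝ)).sub (hasDerivAt_id t)) hm.ne')
    refine this.congr_deriv ?_
    simp only [Pi.add_apply, Pi.sub_apply, id_eq]
    field_simp
    ring
  have hpos : (0:ℝ) < (1 + t) / (1 - t) := div_pos hp hm
  have hlog := (hf.log hpos.ne').div_const 2
  have : artanh = fun y : ℝ => Real.log ((1 + y) / (1 - y)) / 2 := rfl
  rw [this]
  refine hlog.congr_deriv ?_
  field_simp [hsq]
  ring

lemma exp_two_artanh {t : ℝ} (h1 : -1 < t) (h2 : t < 1) :
    Real.exp (2 * artanh t) = (1 + t) / (1 - t) := by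
  have hp : (0:ℝ) < 1 + t := by linarith
  have hm : (0:ℝ) < 1 - t := by linarith
  have : 2 * artanh t = Real.log ((1 + t) / (1 - t)) := by
    unfold artanh; ring
  rw [this, Real.exp_log (div_pos hp hm)]

lemma tanh_two_artanh {t : ℝ} (h1 : -1 < t) (h2 : t < 1) :
    Real.tanh (2 * artanh t) = 2 * t / (1 + t ^ 2) := by
  have hp : (0:ℝ) < 1 + t := by linarith
  have hm : (0:ℝ) < 1 - t := by linarith
  have he : Real.exp (2 * artanh t) = (1 + t) / (1 - t) := exp_two_artanh h1 h2
  have hen : Real.exp (-(2 * artanh t)) = (1 - t) / (1 + t) := by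
    rw [Real.exp_neg, he, inv_div]
  have hq : (0:ℝ) < 1 + t ^ 2 := by positivity
  rw [Real.tanh_eq_sinh_div_cosh, Real.sinh_eq, Real.cosh_eq, he, hen]
  field_simp
  ring

/-- The substitution `x = 2 arctan (tanh (ρ/2))`, i.e. `ρ = 2 artanh (tan (x/2))`,
transforms the cylinder radial equation `φ'' + tanh ρ · φ' + λ φ = 0` into
`Ψ'' + (λ / cos² x) Ψ = 0`, preserving the initial conditions. -/
theorem cylinder_substitution (lam : ℝ) (φ : ℝ → ℝ)
    (hφ : Differentiable ℝ φ) (hφ' : Differentiable ℝ (deriv φ))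
    (hφ_eq : ∀ ρ : ℝ,
      deriv (deriv φ) ρ + Real.tanh ρ * deriv φ ρ + lam * φ ρ = 0)
    (Ψ : ℝ → ℝ)
    (hΨ : ∀ x : ℝ, Ψ x = φ (2 * artanh (Real.tan (x / 2)))) :
    (∀ x ∈ Set.Ioo (-(Real.pi / 2)) (Real.pi / 2),
      deriv (deriv Ψ) x + (lam / (Real.cos x) ^ 2) * Ψ x = 0) ∧
    (φ 0 = 0 → deriv φ 0 = 1 → Ψ 0 = 0 ∧ deriv Ψ 0 = 1) := by
  set g : ℝ → ℝ := fun y => 2 * artanh (Real.tan (y / 2)) with hg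
  have hΨfun : Ψ = fun y => φ (g y) := funext hΨ
  have hpi := Real.pi_pos
  -- basic facts for x in the interval
  have hmem : ∀ x ∈ Set.Ioo (-(Real.pi / 2)) (Real.pi / 2),
      -1 < Real.tan (x / 2) ∧ Real.tan (x / 2) < 1 ∧ Real.cos (x/2) ≠ 0 ∧
      Real.cos x ≠ 0 := by
    intro x hx
    obtain ⟨hx1, hx2⟩ := hx
    have h4 : x / 2 ∈ Set.Ioo (-(Real.pi / 2)) (Real.pi / 2) := by
      constructor <;> [linarith; linarith]
    have hq : -(Real.pi/4) ∈ Set.Ioo (-(Real.pi / 2)) (Real.pi / 2) := by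
      constructor <;> [linarith; linarith]
    have hq' : (Real.pi/4) ∈ Set.Ioo (-(Real.pi / 2)) (Real.pi / 2) := by
      constructor <;> [linarith; linarith]
    have hlt : Real.tan (x/2) < 1 := by
      have := Real.strictMonoOn_tan h4 hq' (by linarith)
      rwa [Real.tan_pi_div_four] at this
    have hgt : -1 < Real.tan (x/2) := by
      have := Real.strictMonoOn_tan hq h4 (by linarith)
      rwa [Real.tan_neg, Real.tan_pi_div_four] at this
    have hc2 : 0 < Real.cos (x/2) := Real.cos_pos_of_mem_Ioo h4
    have hc : 0 < Real.cos x := Real.cos_pos_of_mem_Ioo ⟨hx1, hx2⟩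
    exact ⟨hgt, hlt, hc2.ne', hc.ne'⟩
  -- trig identities
  have hcosid : ∀ x : ℝ, Real.cos (x/2) ≠ 0 →
      (1 - Real.tan (x/2) ^ 2) * Real.cos (x/2) ^ 2 = Real.cos x := by
    intro x hc
    have h2 : Real.cos (2 * (x/2)) = 2 * Real.cos (x/2) ^ 2 - 1 := Real.cos_two_mul _
    have h3 : (2 : ℝ) * (x/2) = x := by ring
    rw [h3] at h2
    have hs := Real.sin_sq_add_cos_sq (x/2)
    rw [Real.tan_eq_sin_div_cos]
    field_simp
    nlinarith [hs, h2]
  have hsinid : ∀ x : ℝ, Real.cos (x/2) ≠ 0 →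
      2 * Real.tan (x/2) / (1 + Real.tan (x/2) ^ 2) = Real.sin x := by
    intro x hc
    have h2 : Real.sin (2 * (x/2)) = 2 * Real.sin (x/2) * Real.cos (x/2) := Real.sin_two_mul _
    have h3 : (2 : ℝ) * (x/2) = x := by ring
    rw [h3] at h2
    have hs := Real.sin_sq_add_cos_sq (x/2)
    rw [Real.tan_eq_sin_div_cos]
    rw [div_eq_iff (by positivity : (0:ℝ) < 1 + (Real.sin (x/2)/Real.cos (x/2))^2).ne']
    field_simp
    linear_combination -h2 - Real.sin x * hs
  -- derivative of g
  have hg_deriv : ∀ x ∈ Set.Ioo (-(Real.pi / 2)) (Real.pi / 2),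
      HasDerivAt g (1 / Real.cos x) x := by
    intro x hx
    obtain ⟨h1, h2, hc2, hc⟩ := hmem x hx
    have htan : HasDerivAt (fun y : ℝ => Real.tan (y / 2))
        (1 / Real.cos (x/2) ^ 2 * (1/2)) x :=
      by have := (Real.hasDerivAt_tan hc2).comp x ((hasDerivAt_id x).div_const 2); exact this
    have hart : HasDerivAt artanh (1 / (1 - Real.tan (x/2) ^ 2)) (Real.tan (x/2)) :=
      artanh_hasDerivAt h1 h2
    have hcomp := (hart.comp x htan).const_mul 2
    refine hcomp.congr_deriv ?_
    have hne : (1 - Real.tan (x/2) ^ 2) * Real.cos (x/2) ^ 2 = Real.cos x := hcosid x hc2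
    have hne2 : (1 : ℝ) - Real.tan (x/2)^2 ≠ 0 := by
      intro h
      rw [h, zero_mul] at hne
      exact hc hne.symm
    field_simp
    nlinarith [hne]
  -- tanh (g x) = sin x
  have htanh : ∀ x ∈ Set.Ioo (-(Real.pi / 2)) (Real.pi / 2),
      Real.tanh (g x) = Real.sin x := by
    intro x hx
    obtain ⟨h1, h2, hc2, hc⟩ := hmem x hx
    rw [hg, tanh_two_artanh h1 h2, hsinid x hc2]
  -- first derivative of Ψ
  have hΨ_deriv : ∀ x ∈ Set.Ioo (-(Real.pi / 2)) (Real.pi / 2),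
      HasDerivAt Ψ (deriv φ (g x) * (1 / Real.cos x)) x := by
    intro x hx
    rw [hΨfun]
    exact ((hφ (g x)).hasDerivAt).comp x (hg_deriv x hx)
  have hopen : IsOpen (Set.Ioo (-(Real.pi / 2)) (Real.pi / 2)) := isOpen_Ioo
  have hderiv_eq : ∀ x ∈ Set.Ioo (-(Real.pi / 2)) (Real.pi / 2),
      deriv Ψ x = deriv φ (g x) * (Real.cos x)⁻¹ := by
    intro x hx
    rw [(hΨ_deriv x hx).deriv, one_div]
  constructor
  · intro x hx
    obtain ⟨h1, h2, hc2, hc⟩ := hmem x hx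
    -- second derivative
    have hH : HasDerivAt (fun y => deriv φ (g y) * (Real.cos y)⁻¹)
        ((deriv (deriv φ) (g x) * (1 / Real.cos x)) * (Real.cos x)⁻¹ +
          deriv φ (g x) * (Real.sin x / Real.cos x ^ 2)) x := by
      have h1' : HasDerivAt (fun y => deriv φ (g y))
          (deriv (deriv φ) (g x) * (1 / Real.cos x)) x :=
        ((hφ' (g x)).hasDerivAt).comp x (hg_deriv x hx)
      have h2' : HasDerivAt (fun y => (Real.cos y)⁻¹)
          (Real.sin x / Real.cos x ^ 2) x := by
        have := (Real.hasDerivAt_cos x).inv hc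
        rw [neg_neg] at this
        exact this
      exact h1'.mul h2' 
    have hev : deriv Ψ =ᶠ[nhds x] fun y => deriv φ (g y) * (Real.cos y)⁻¹ := by
      filter_upwards [hopen.mem_nhds hx] with y hy
      exact hderiv_eq y hy
    have hD2 : deriv (deriv Ψ) x =
        (deriv (deriv φ) (g x) * (1 / Real.cos x)) * (Real.cos x)⁻¹ +
          deriv φ (g x) * (Real.sin x / Real.cos x ^ 2) := by
      rw [hev.deriv_eq, hH.deriv]
    have heq := hφ_eq (g x)
    rw [htanh x hx] at heq
    rw [hD2, hΨ x]
    have hgx : φ (2 * artanh (Real.tan (x / 2))) = φ (g x) := rfl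
    rw [hgx]
    field_simp
    linear_combination heq
  · intro h0 h0'
    have ht0 : Real.tan ((0:ℝ) / 2) = 0 := by norm_num
    have hg0 : g 0 = 0 := by
      rw [hg]; simp only [ht0]
      unfold artanh; norm_num
    have h0mem : (0:ℝ) ∈ Set.Ioo (-(Real.pi / 2)) (Real.pi / 2) := by
      constructor <;> [linarith; linarith]
    constructor
    · rw [hΨ 0]
      have : (2 : ℝ) * artanh (Real.tan (0 / 2)) = g 0 := rfl
      rw [this, hg0, h0]
    · rw [hderiv_eq 0 h0mem, hg0, h0', Real.cos_zero]
      norm_num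
end

section
/- Let k > 0 and let r₁, r₂ : ℝ → ℝ be continuously differentiable on [0, k]. Set A = ∫₀ᵏ (sinh(r₁(t)) − sinh(r₂(t))) dt. Then ∫₀ᵏ √(1 + r₁'(t)²)·cosh(r₁(t)) dt + ∫₀ᵏ √(1 + r₂'(t)²)·cosh(r₂(t)) dt ≥ 2k·cosh(arsinh(A/(2k))) (equivalently, the left-hand side is at least √(4k² + A²)). -/
open intervalIntegral Real

-- pointwise Cauchy-Schwarz bound
lemma ptB (k S x : ℝ) : k + S * Real.sinh x ≤ Real.sqrt (k^2 + S^2) * Real.cosh x := by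
  set w := Real.sqrt (k^2 + S^2) with hwdef
  have hw : 0 ≤ w := Real.sqrt_nonneg _
  have hw2 : w^2 = k^2 + S^2 := Real.sq_sqrt (by positivity)
  have hc : 0 ≤ Real.cosh x := (Real.cosh_pos (x := x)).le
  have hc2 : Real.cosh x ^ 2 = 1 + Real.sinh x ^ 2 := by
    rw [Real.cosh_sq']
  nlinarith [sq_nonneg (S - k * Real.sinh x), mul_nonneg hw hc,
    sq_nonneg (w * Real.cosh x - k - S * Real.sinh x),
    sq_nonneg (w * Real.cosh x + k + S * Real.sinh x)]

lemma stepD (k S₁ S₂ : ℝ) :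
    Real.sqrt (4*k^2 + (S₁ - S₂)^2) ≤ Real.sqrt (k^2 + S₁^2) + Real.sqrt (k^2 + S₂^2) := by
  set u := Real.sqrt (k^2 + S₁^2) with hu'
  set v := Real.sqrt (k^2 + S₂^2) with hv'
  have hu : 0 ≤ u := Real.sqrt_nonneg _
  have hv : 0 ≤ v := Real.sqrt_nonneg _
  have hu2 : u^2 = k^2 + S₁^2 := Real.sq_sqrt (by positivity)
  have hv2 : v^2 = k^2 + S₂^2 := Real.sq_sqrt (by positivity)
  have huv : k^2 - S₁*S₂ ≤ u*v := by
    nlinarith [mul_nonneg hu hv, sq_nonneg (S₁ + S₂), sq_nonneg (u*v - k^2 + S₁*S₂),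
      sq_nonneg (u*v + k^2 - S₁*S₂)]
  have h1 : 4*k^2 + (S₁ - S₂)^2 ≤ (u + v)^2 := by nlinarith [huv]
  calc Real.sqrt (4*k^2 + (S₁ - S₂)^2) ≤ Real.sqrt ((u+v)^2) := Real.sqrt_le_sqrt h1
    _ = u + v := Real.sqrt_sq (by linarith)

lemma lower_bound (k : ℝ) (hk : 0 < k) (r : ℝ → ℝ)
    (hr : ContDiffOn ℝ 1 r (Set.Icc 0 k)) :
    Real.sqrt (k^2 + (∫ t in (0:ℝ)..k, Real.sinh (r t))^2) ≤
      ∫ t in (0:ℝ)..k, Real.sqrt (1 + (deriv r t) ^ 2) * Real.cosh (r t) := by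
  set S := ∫ t in (0:ℝ)..k, Real.sinh (r t) with hS
  have hrc : ContinuousOn r (Set.Icc 0 k) := hr.continuousOn
  have hd : ContinuousOn (derivWithin r (Set.Icc 0 k)) (Set.Icc 0 k) :=
    hr.continuousOn_derivWithin (uniqueDiffOn_Icc hk) le_rfl
  set g : ℝ → ℝ := fun t => Real.sqrt (1 + (derivWithin r (Set.Icc 0 k) t) ^ 2) * Real.cosh (r t) with hg
  have hgc : ContinuousOn g (Set.Icc 0 k) := by
    apply ContinuousOn.mul
    · exact (continuousOn_const.add (hd.pow 2)).sqrt
    · exact Real.continuous_cosh.comp_continuousOn hrc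
  have huIcc : Set.uIcc (0:ℝ) k = Set.Icc 0 k := Set.uIcc_of_le hk.le
  have hIg : IntervalIntegrable g MeasureTheory.volume 0 k :=
    (huIcc ▸ hgc).intervalIntegrable
  have hcosh_int : IntervalIntegrable (fun t => Real.cosh (r t)) MeasureTheory.volume 0 k :=
    (huIcc ▸ (Real.continuous_cosh.comp_continuousOn hrc)).intervalIntegrable
  have hsinh_int : IntervalIntegrable (fun t => Real.sinh (r t)) MeasureTheory.volume 0 k :=
    (huIcc ▸ (Real.continuous_sinh.comp_continuousOn hrc)).intervalIntegrable
  -- replace deriv by derivWithin a.e.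
  have heq : (∫ t in (0:ℝ)..k, Real.sqrt (1 + (deriv r t) ^ 2) * Real.cosh (r t)) =
      ∫ t in (0:ℝ)..k, g t := by
    apply intervalIntegral.integral_congr_ae
    have hae : ∀ᵐ x : ℝ, x ≠ k := by
      rw [MeasureTheory.ae_iff]
      have : {x : ℝ | ¬ x ≠ k} = {k} := by ext x; simp
      rw [this]
      exact MeasureTheory.measure_singleton k
    filter_upwards [hae] with x hx hxm
    rw [Set.uIoc_of_le hk.le] at hxm
    have hxo : x ∈ Set.Ioo (0:ℝ) k := ⟨hxm.1, lt_of_le_of_ne hxm.2 hx⟩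
    have hn : Set.Icc (0:ℝ) k ∈ nhds x := Icc_mem_nhds hxo.1 hxo.2
    have hdw : derivWithin r (Set.Icc 0 k) x = deriv r x := derivWithin_of_mem_nhds hn
    simp only [hg, hdw]
  rw [heq]
  -- step B: sqrt(k^2+S^2) ≤ ∫ cosh (r t)
  set w := Real.sqrt (k^2 + S^2) with hw'
  have hwpos : 0 < w := Real.sqrt_pos.mpr (by positivity)
  have hw2 : w^2 = k^2 + S^2 := Real.sq_sqrt (by positivity)
  have hlin_int : IntervalIntegrable (fun t => k + S * Real.sinh (r t)) MeasureTheory.volume 0 k :=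
    intervalIntegrable_const.add (hsinh_int.const_mul S)
  have hwc_int : IntervalIntegrable (fun t => w * Real.cosh (r t)) MeasureTheory.volume 0 k :=
    hcosh_int.const_mul w
  have hmono : (∫ t in (0:ℝ)..k, (k + S * Real.sinh (r t))) ≤
      ∫ t in (0:ℝ)..k, w * Real.cosh (r t) := by
    apply intervalIntegral.integral_mono_on hk.le hlin_int hwc_int
    intro t _
    exact ptB k S (r t)
  have hL : (∫ t in (0:ℝ)..k, (k + S * Real.sinh (r t))) = k*k + S*S := by
    rw [intervalIntegral.integral_add intervalIntegrable_const (hsinh_int.const_mul S),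
      intervalIntegral.integral_const, intervalIntegral.integral_const_mul]
    simp [← hS]
  have hR : (∫ t in (0:ℝ)..k, w * Real.cosh (r t)) = w * ∫ t in (0:ℝ)..k, Real.cosh (r t) :=
    intervalIntegral.integral_const_mul _ _
  rw [hL, hR] at hmono
  have hstep2 : w ≤ ∫ t in (0:ℝ)..k, Real.cosh (r t) := by
    have : w * w ≤ w * ∫ t in (0:ℝ)..k, Real.cosh (r t) := by nlinarith
    exact le_of_mul_le_mul_left this hwpos
  -- step A: ∫ cosh ≤ ∫ g
  have hstepA : (∫ t in (0:ℝ)..k, Real.cosh (r t)) ≤ ∫ t in (0:ℝ)..k, g t := by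
    apply intervalIntegral.integral_mono_on hk.le hcosh_int hIg
    intro t _
    show Real.cosh (r t) ≤ Real.sqrt (1 + (derivWithin r (Set.Icc 0 k) t) ^ 2) * Real.cosh (r t)
    have h1 : (1:ℝ) ≤ Real.sqrt (1 + (derivWithin r (Set.Icc 0 k) t) ^ 2) := by
      nlinarith [Real.sq_sqrt (show (0:ℝ) ≤ 1 + (derivWithin r (Set.Icc 0 k) t) ^ 2 by positivity),
        Real.sqrt_nonneg (1 + (derivWithin r (Set.Icc 0 k) t) ^ 2),
        sq_nonneg (derivWithin r (Set.Icc 0 k) t)]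
    nlinarith [(Real.cosh_pos (x := r t)).le]
  linarith

/-- Graph case of Lemma 2.35: isoperimetric inequality for annuli in a
hyperbolic cylinder. The boundary length of the annulus bounded by the graphs
of `r₁` and `r₂` over a core geodesic of length `k` is at least the boundary
length `2 k cosh (arsinh (A / (2k)))` of the symmetrized annulus of equal
area `A`. -/
theorem cylinder_annulus_isoperimetric (k : ℝ) (hk : 0 < k)
    (r₁ r₂ : ℝ → ℝ)
    (hr₁ : ContDiffOn ℝ 1 r₁ (Set.Icc 0 k))
    (hr₂ : ContDiffOn ℝ 1 r₂ (Set.Icc 0 k))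
    (A : ℝ) (hA : A = ∫ t in (0:ℝ)..k, (Real.sinh (r₁ t) - Real.sinh (r₂ t))) :
    2 * k * Real.cosh (Real.arsinh (A / (2 * k))) ≤
      (∫ t in (0:ℝ)..k, Real.sqrt (1 + (deriv r₁ t) ^ 2) * Real.cosh (r₁ t)) +
      (∫ t in (0:ℝ)..k, Real.sqrt (1 + (deriv r₂ t) ^ 2) * Real.cosh (r₂ t)) := by
  have huIcc : Set.uIcc (0:ℝ) k = Set.Icc 0 k := Set.uIcc_of_le hk.le
  have h1int : IntervalIntegrable (fun t => Real.sinh (r₁ t)) MeasureTheory.volume 0 k :=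
    (huIcc ▸ (Real.continuous_sinh.comp_continuousOn hr₁.continuousOn)).intervalIntegrable
  have h2int : IntervalIntegrable (fun t => Real.sinh (r₂ t)) MeasureTheory.volume 0 k :=
    (huIcc ▸ (Real.continuous_sinh.comp_continuousOn hr₂.continuousOn)).intervalIntegrable
  set S₁ := ∫ t in (0:ℝ)..k, Real.sinh (r₁ t) with hS₁
  set S₂ := ∫ t in (0:ℝ)..k, Real.sinh (r₂ t) with hS₂
  have hAeq : A = S₁ - S₂ := by
    rw [hA, intervalIntegral.integral_sub h1int h2int]
  have hlhs : 2 * k * Real.cosh (Real.arsinh (A / (2 * k))) = Real.sqrt (4*k^2 + A^2) := by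
    rw [Real.cosh_arsinh]
    have h4 : 4*k^2 + A^2 = (2*k)^2 * (1 + (A/(2*k))^2) := by
      field_simp
      ring
    rw [h4, Real.sqrt_mul (by positivity), Real.sqrt_sq (by positivity)]
  rw [hlhs, hAeq]
  have hb1 := lower_bound k hk r₁ hr₁
  have hb2 := lower_bound k hk r₂ hr₂
  have hD := stepD k S₁ S₂
  rw [← hS₁] at hb1
  rw [← hS₂] at hb2
  linarith
end

section
/- Let k > 0 and let r₁, r₂ : ℝ → ℝ be continuous on [0, k]. Then (∫₀ᵏ (exp(r₂(t)) + exp(−r₁(t))) dt) · (∫₀ᵏ (exp(−r₂(t)) + exp(r₁(t))) dt) ≥ 4k². -/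
/-- Key Cauchy–Schwarz inequality in the proof of Lemma 2.35:
`(∫₀ᵏ (e^{r₂} + e^{-r₁})) · (∫₀ᵏ (e^{-r₂} + e^{r₁})) ≥ 4k²`. -/
theorem exp_integral_product_ge (k : ℝ) (hk : 0 < k)
    (r₁ r₂ : ℝ → ℝ)
    (hr₁ : ContinuousOn r₁ (Set.Icc 0 k))
    (hr₂ : ContinuousOn r₂ (Set.Icc 0 k)) :
    4 * k ^ 2 ≤
      (∫ t in (0:ℝ)..k, (Real.exp (r₂ t) + Real.exp (-(r₁ t)))) *
      (∫ t in (0:ℝ)..k, (Real.exp (-(r₂ t)) + Real.exp (r₁ t))) := by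
  set f : ℝ → ℝ := fun t => Real.exp (r₂ t) + Real.exp (-(r₁ t)) with hf
  set g : ℝ → ℝ := fun t => Real.exp (-(r₂ t)) + Real.exp (r₁ t) with hg
  have hfc : ContinuousOn f (Set.Icc 0 k) :=
    (hr₂.rexp).add ((hr₁.neg).rexp)
  have hgc : ContinuousOn g (Set.Icc 0 k) :=
    ((hr₂.neg).rexp).add (hr₁.rexp)
  have hfi : IntervalIntegrable f MeasureTheory.volume 0 k :=
    ContinuousOn.intervalIntegrable (by rwa [Set.uIcc_of_le hk.le])
  have hgi : IntervalIntegrable g MeasureTheory.volume 0 k :=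
    ContinuousOn.intervalIntegrable (by rwa [Set.uIcc_of_le hk.le])
  set A : ℝ := ∫ t in (0:ℝ)..k, f t with hA
  set B : ℝ := ∫ t in (0:ℝ)..k, g t with hB
  have hBpos : 0 < B := by
    apply intervalIntegral.intervalIntegral_pos_of_pos_on hgi _ hk
    intro x _
    positivity
  have hApos : 0 < A := by
    apply intervalIntegral.intervalIntegral_pos_of_pos_on hfi _ hk
    intro x _
    positivity
  -- key: for all s > 0, A + s^2 * B ≥ 4 * s * k
  have key : ∀ s : ℝ, 0 < s → 4 * s * k ≤ A + s ^ 2 * B := by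
    intro s hs
    have h1 : A + s ^ 2 * B = ∫ t in (0:ℝ)..k, (f t + s ^ 2 * g t) := by
      rw [intervalIntegral.integral_add hfi (hgi.const_mul _),
        intervalIntegral.integral_const_mul]
    have h2 : (4 : ℝ) * s * k = ∫ _t in (0:ℝ)..k, (4 * s : ℝ) := by
      simp [smul_eq_mul]; ring
    rw [h1, h2]
    apply intervalIntegral.integral_mono_on hk.le intervalIntegrable_const
      (hfi.add (hgi.const_mul _))
    intro x _
    have e1 : Real.exp (r₂ x) * Real.exp (-(r₂ x)) = 1 := by
      rw [← Real.exp_add]; simp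
    have e2 : Real.exp (r₁ x) * Real.exp (-(r₁ x)) = 1 := by
      rw [← Real.exp_add]; simp
    have p1 : 0 < Real.exp (r₂ x) := Real.exp_pos _
    have p2 : 0 < Real.exp (r₁ x) := Real.exp_pos _
    have q1 : 0 < Real.exp (-(r₂ x)) := Real.exp_pos _
    have q2 : 0 < Real.exp (-(r₁ x)) := Real.exp_pos _
    simp only [f, g]
    nlinarith [mul_nonneg (sq_nonneg (Real.exp (r₂ x) - s)) q1.le,
      mul_nonneg (sq_nonneg (Real.exp (-(r₁ x)) - s)) p2.le, e1, e2, p1.le, p2.le]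
  have hs : 0 < Real.sqrt (A / B) := Real.sqrt_pos.mpr (by positivity)
  have hsq : Real.sqrt (A / B) ^ 2 = A / B := Real.sq_sqrt (by positivity)
  have h := key _ hs
  rw [hsq, div_mul_cancel₀ _ hBpos.ne'] at h
  -- h : 4 * sqrt(A/B) * k ≤ 2 A
  have h2 : (4 * Real.sqrt (A / B) * k) ^ 2 ≤ (A + A) ^ 2 := by
    apply pow_le_pow_left₀ (by positivity) h
  have h3 : (4 * Real.sqrt (A / B) * k) ^ 2 = 16 * (A / B) * k ^ 2 := by
    rw [mul_pow, mul_pow, hsq]; ring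
  rw [h3] at h2
  have hdb : A / B * B = A := div_mul_cancel₀ _ hBpos.ne'
  have h4 := mul_le_mul_of_nonneg_right h2 hBpos.le
  nlinarith [hApos, hBpos, mul_pos hApos hBpos]
end

section
/- Let H be the group with presentation ⟨r, s, t, u | r⁸ = s² = t² = u³ = 1, (r·s)² = 1, (s·t)² = 1, r·t·r³·t = 1, u·r = r·u², u²·r = s·t·u, u·s = s·u², u·t = r·s·u⟩ (the same presentation as the Bolza isometry group but with the erroneous relation u·r = r·u² in place of u·r = r⁷·u²). Then H is a finite group of order 12. -/
namespace BolzaStmt6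

def r : FreeGroup (Fin 4) := FreeGroup.of 0
def s : FreeGroup (Fin 4) := FreeGroup.of 1
def t : FreeGroup (Fin 4) := FreeGroup.of 2
def u : FreeGroup (Fin 4) := FreeGroup.of 3

/-- Relators of Jenni's (erroneous) presentation, with `u·r = r·u²` in place of
the correct relation `u·r = r⁷·u²`. -/
def jenniRels : Set (FreeGroup (Fin 4)) :=
  { r ^ 8, s ^ 2, t ^ 2, u ^ 3, (r * s) ^ 2, (s * t) ^ 2, r * t * r ^ 3 * t,
    (u * r) * (r * u ^ 2)⁻¹, (u ^ 2 * r) * (s * t * u)⁻¹,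
    (u * s) * (s * u ^ 2)⁻¹, (u * t) * (r * s * u)⁻¹ }

/-- The group given by Jenni's erroneous relations. -/
abbrev JenniGroup := PresentedGroup jenniRels

/-! ### Auxiliary development: `JenniGroup ≃* DihedralGroup 6` -/

open DihedralGroup in
/-- Images of the four generators in `DihedralGroup 6`. -/
def fD : Fin 4 → DihedralGroup 6 := fun i =>
  match i with
  | 0 => sr 3
  | 1 => sr 0
  | 2 => DihedralGroup.r 3
  | 3 => DihedralGroup.r 4

lemma relsHold : ∀ w ∈ jenniRels, FreeGroup.lift fD w = 1 := by
  intro w hw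
  simp only [jenniRels, Set.mem_insert_iff, Set.mem_singleton_iff] at hw
  rcases hw with h|h|h|h|h|h|h|h|h|h|h <;> subst h <;>
    simp only [r, s, t, u, map_mul, map_pow, map_inv, FreeGroup.lift_apply_of, fD] <;> decide

/-- The homomorphism from the presented group to `DihedralGroup 6`. -/
def φ : JenniGroup →* DihedralGroup 6 := PresentedGroup.toGroup relsHold

def R' : JenniGroup := PresentedGroup.of 0
def S' : JenniGroup := PresentedGroup.of 1
def T' : JenniGroup := PresentedGroup.of 2
def U' : JenniGroup := PresentedGroup.of 3

lemma mk_rel {w : FreeGroup (Fin 4)} (h : w ∈ jenniRels) :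
    PresentedGroup.mk jenniRels w = 1 :=
  (QuotientGroup.eq_one_iff w).2 (Subgroup.subset_normalClosure h)

lemma hR8 : R' ^ 8 = 1 := by
  have h := mk_rel (show r ^ 8 ∈ jenniRels by simp [jenniRels])
  simp only [r, map_pow] at h; exact h
lemma hS2 : S' ^ 2 = 1 := by
  have h := mk_rel (show s ^ 2 ∈ jenniRels by simp [jenniRels])
  simp only [s, map_pow] at h; exact h
lemma hT2 : T' ^ 2 = 1 := by
  have h := mk_rel (show t ^ 2 ∈ jenniRels by simp [jenniRels])
  simp only [t, map_pow] at h; exact h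
lemma hU3 : U' ^ 3 = 1 := by
  have h := mk_rel (show u ^ 3 ∈ jenniRels by simp [jenniRels])
  simp only [u, map_pow] at h; exact h
lemma hRS : (R' * S') ^ 2 = 1 := by
  have h := mk_rel (show (r * s) ^ 2 ∈ jenniRels by simp [jenniRels])
  simp only [r, s, map_pow, map_mul] at h; exact h
lemma hST : (S' * T') ^ 2 = 1 := by
  have h := mk_rel (show (s * t) ^ 2 ∈ jenniRels by simp [jenniRels])
  simp only [s, t, map_pow, map_mul] at h; exact h
lemma hUR : U' * R' = R' * U' ^ 2 := by
  have := mk_rel (show (u * r) * (r * u ^ 2)⁻¹ ∈ jenniRels by simp [jenniRels])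
  simp only [map_mul, map_inv, map_pow] at this
  exact mul_inv_eq_one.1 this
lemma hU2R : U' ^ 2 * R' = S' * T' * U' := by
  have := mk_rel (show (u ^ 2 * r) * (s * t * u)⁻¹ ∈ jenniRels by simp [jenniRels])
  simp only [map_mul, map_inv, map_pow] at this
  exact mul_inv_eq_one.1 this
lemma hUS : U' * S' = S' * U' ^ 2 := by
  have := mk_rel (show (u * s) * (s * u ^ 2)⁻¹ ∈ jenniRels by simp [jenniRels])
  simp only [map_mul, map_inv, map_pow] at this
  exact mul_inv_eq_one.1 this
lemma hUT : U' * T' = R' * S' * U' := by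
  have := mk_rel (show (u * t) * (r * s * u)⁻¹ ∈ jenniRels by simp [jenniRels])
  simp only [map_mul, map_inv, map_pow] at this
  exact mul_inv_eq_one.1 this

/-! Derived relations. -/

lemma hS2b : S' * S' = 1 := by rw [← pow_two]; exact hS2
lemma hT2b : T' * T' = 1 := by rw [← pow_two]; exact hT2
lemma hU3b : U' * (U' * U') = 1 := by
  have := hU3; rw [pow_succ, pow_two, mul_assoc] at this; exact this
lemma hSinv : S'⁻¹ = S' := inv_eq_of_mul_eq_one_right hS2b
lemma hTinv : T'⁻¹ = T' := inv_eq_of_mul_eq_one_right hT2b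
lemma hUinv : U'⁻¹ = U' * U' := inv_eq_of_mul_eq_one_right hU3b

lemma hS2x (x : JenniGroup) : S' * (S' * x) = x := by rw [← mul_assoc, hS2b, one_mul]
lemma hT2x (x : JenniGroup) : T' * (T' * x) = x := by rw [← mul_assoc, hT2b, one_mul]
lemma hU3x (x : JenniGroup) : U' * (U' * (U' * x)) = x := by
  rw [← mul_assoc, ← mul_assoc, show U' * U' * U' = 1 from by rw [mul_assoc]; exact hU3b,
    one_mul]

lemma hUR' : U' * R' = R' * (U' * U') := by rw [hUR, pow_two]
lemma hURx (x : JenniGroup) : U' * (R' * x) = R' * (U' * (U' * x)) := by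
  rw [← mul_assoc, hUR', mul_assoc, mul_assoc]

lemma lU2R : U' * (U' * R') = R' * U' := by
  rw [hUR', hURx, hU3x]

lemma hU2R' : U' * (U' * R') = S' * (T' * U') := by
  have := hU2R; rw [pow_two, mul_assoc, mul_assoc] at this; exact this

lemma lRST : R' = S' * T' := by
  have h : R' * U' = S' * T' * U' := by rw [← lU2R, hU2R', mul_assoc]
  exact mul_right_cancel h

lemma lR2b : R' * R' = 1 := by
  calc R' * R' = (S' * T') * (S' * T') := by rw [← lRST]
    _ = (S' * T') ^ 2 := (pow_two _).symm
    _ = 1 := hST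

lemma hRinv : R'⁻¹ = R' := inv_eq_of_mul_eq_one_right lR2b

lemma lRScomm : R' * S' = S' * R' := by
  have h2 : (R' * S') * (R' * S') = 1 := by rw [← pow_two]; exact hRS
  have h3 : (R' * S')⁻¹ = R' * S' := inv_eq_of_mul_eq_one_right h2
  calc R' * S' = (R' * S')⁻¹ := h3.symm
    _ = S'⁻¹ * R'⁻¹ := mul_inv_rev _ _
    _ = S' * R' := by rw [hSinv, hRinv]

lemma lSR_T : S' * R' = T' := by
  rw [lRST, ← mul_assoc, hS2b, one_mul]

lemma lRS_T : R' * S' = T' := lRScomm.trans lSR_T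

lemma sTS : T' * S' = S' * T' := by
  calc T' * S' = S' * (R' * S') := by rw [← lSR_T, mul_assoc]
    _ = S' * T' := by rw [lRS_T]

lemma sUT : U' * T' = T' * U' := by
  have := hUT; rw [lRS_T] at this; exact this

lemma sUS : U' * S' = S' * (U' * U') := by rw [hUS, pow_two]

lemma sTSx (x : JenniGroup) : T' * (S' * x) = S' * (T' * x) := by
  rw [← mul_assoc, sTS, mul_assoc]
lemma sUTx (x : JenniGroup) : U' * (T' * x) = T' * (U' * x) := by
  rw [← mul_assoc, sUT, mul_assoc]
lemma sUSx (x : JenniGroup) : U' * (S' * x) = S' * (U' * (U' * x)) := by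
  rw [← mul_assoc, sUS, mul_assoc, mul_assoc]

def A' : JenniGroup := T' * U'
def B' : JenniGroup := S'

lemma lA3 : A' ^ 3 = T' := by
  simp only [A', pow_succ, pow_zero, one_mul, mul_assoc]
  simp only [sUTx, sUT, hT2x, hT2b, hU3x, hU3b, one_mul, mul_one]

lemma lA4 : A' ^ 4 = U' := by
  simp only [A', pow_succ, pow_zero, one_mul, mul_assoc]
  simp only [sUTx, sUT, hT2x, hT2b, hU3x, hU3b, one_mul, mul_one]

lemma lA6 : A' ^ 6 = 1 := by
  simp only [A', pow_succ, pow_zero, one_mul, mul_assoc]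
  simp only [sUTx, sUT, hT2x, hT2b, hU3x, hU3b, one_mul, mul_one]

lemma lBAB : B' * A' * B'⁻¹ = A'⁻¹ := by
  show S' * (T' * U') * S'⁻¹ = (T' * U')⁻¹
  rw [hSinv, mul_inv_rev, hTinv, hUinv]
  simp only [mul_assoc]
  simp only [sUSx, sUS, sTSx, sTS, sUTx, sUT, hS2x, hS2b, hT2x, hT2b, hU3x, hU3b,
    one_mul, mul_one]

lemma lR_BA3 : R' = B' * A' ^ 3 := by
  show R' = S' * A' ^ 3
  rw [lA3, lRST]


lemma hBB : B' * B' = 1 := hS2b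

/-- The additive hom `ZMod 6 →+ Additive JenniGroup` sending `1` to `A'`. -/
def Φ : ZMod 6 →+ Additive JenniGroup :=
  ZMod.lift 6 ⟨zmultiplesHom (Additive JenniGroup) (Additive.ofMul A'), by
    simp only [zmultiplesHom_apply]
    rw [show ((6 : ℕ) : ℤ) • Additive.ofMul A' = Additive.ofMul (A' ^ ((6 : ℕ) : ℤ)) from
      (ofMul_zpow _ _).symm, zpow_natCast, lA6]
    rfl⟩

def Φm (i : ZMod 6) : JenniGroup := Additive.toMul (Φ i)

lemma Φm_add (i j : ZMod 6) : Φm (i + j) = Φm i * Φm j := by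
  unfold Φm; rw [map_add]; rfl

lemma Φm_zero : Φm 0 = 1 := by unfold Φm; rw [map_zero]; rfl

lemma Φm_intCast (k : ℤ) : Φm (k : ZMod 6) = A' ^ k := by
  unfold Φm Φ
  rw [ZMod.lift_coe]
  show Additive.toMul ((zmultiplesHom (Additive JenniGroup) (Additive.ofMul A')) k) = A' ^ k
  rw [zmultiplesHom_apply, ← ofMul_zpow]
  rfl

lemma Φm_neg (i : ZMod 6) : Φm (-i) = (Φm i)⁻¹ := by
  unfold Φm; rw [map_neg]; rfl

lemma conjΦ (i : ZMod 6) : B' * Φm i * B' = (Φm i)⁻¹ := by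
  obtain ⟨k, rfl⟩ := ZMod.intCast_surjective i
  rw [Φm_intCast]
  have hB : B'⁻¹ = B' := inv_eq_of_mul_eq_one_right hBB
  calc B' * A' ^ k * B' = B' * A' ^ k * B'⁻¹ := by rw [hB]
    _ = (B' * A' * B'⁻¹) ^ k := by rw [conj_zpow]
    _ = (A'⁻¹) ^ k := by rw [lBAB]
    _ = (A' ^ k)⁻¹ := by rw [inv_zpow]

lemma swapΦ (i : ZMod 6) : Φm i * B' = B' * Φm (-i) := by
  rw [Φm_neg, ← conjΦ i, ← mul_assoc, ← mul_assoc, hBB, one_mul]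

open DihedralGroup in
def ψfun : DihedralGroup 6 → JenniGroup
  | .r i => Φm i
  | .sr i => B' * Φm i

open DihedralGroup in
def ψ : DihedralGroup 6 →* JenniGroup where
  toFun := ψfun
  map_one' := by
    rw [DihedralGroup.one_def]
    show Φm 0 = 1
    exact Φm_zero
  map_mul' := by
    rintro (i | i) (j | j) <;>
      simp only [r_mul_r, r_mul_sr, sr_mul_r, sr_mul_sr, ψfun]
    · rw [Φm_add]
    · symm
      calc Φm i * (B' * Φm j) = (Φm i * B') * Φm j := by rw [mul_assoc]
        _ = (B' * Φm (-i)) * Φm j := by rw [swapΦ]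
        _ = B' * (Φm (-i) * Φm j) := by rw [mul_assoc]
        _ = B' * Φm (-i + j) := by rw [← Φm_add]
        _ = B' * Φm (j - i) := by rw [neg_add_eq_sub]
    · rw [Φm_add, mul_assoc]
    · symm
      calc B' * Φm i * (B' * Φm j) = (B' * (Φm i * B')) * Φm j := by
            simp only [mul_assoc]
        _ = (B' * (B' * Φm (-i))) * Φm j := by rw [swapΦ]
        _ = Φm (-i) * Φm j := by rw [← mul_assoc B', hBB, one_mul]
        _ = Φm (-i + j) := (Φm_add _ _).symm
        _ = Φm (j - i) := by rw [neg_add_eq_sub]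

lemma Φm_natCast (n : ℕ) : Φm ((n : ℤ) : ZMod 6) = A' ^ n := by
  rw [Φm_intCast, zpow_natCast]

lemma φ_of (i : Fin 4) : φ (PresentedGroup.of i) = fD i := PresentedGroup.toGroup.of relsHold

lemma φA : φ A' = DihedralGroup.r 1 := by
  show φ (T' * U') = _
  rw [map_mul]
  show φ (PresentedGroup.of 2) * φ (PresentedGroup.of 3) = _
  rw [φ_of, φ_of]
  decide

lemma φΦm (i : ZMod 6) : φ (Φm i) = DihedralGroup.r i := by
  have : ((i.val : ℤ) : ZMod 6) = i := by
    push_cast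
    simp [ZMod.natCast_val, ZMod.cast_id]
  conv_lhs => rw [← this]
  rw [Φm_natCast, map_pow, φA, DihedralGroup.r_one_pow]
  rw [show ((i.val : ℕ) : ZMod 6) = i by simp [ZMod.natCast_val, ZMod.cast_id]]

lemma φB : φ B' = DihedralGroup.sr 0 := by
  show φ (PresentedGroup.of 1) = _
  rw [φ_of]
  rfl

lemma φψ : φ.comp ψ = MonoidHom.id (DihedralGroup 6) := by
  ext x
  rcases x with i | i
  · show φ (ψfun (DihedralGroup.r i)) = DihedralGroup.r i
    show φ (Φm i) = _
    exact φΦm i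
  · show φ (ψfun (DihedralGroup.sr i)) = DihedralGroup.sr i
    show φ (B' * Φm i) = _
    rw [map_mul, φB, φΦm, DihedralGroup.sr_mul_r, zero_add]

lemma Φm_ofNat3 : Φm 3 = A' ^ 3 := by
  rw [show (3 : ZMod 6) = ((3 : ℤ) : ZMod 6) by norm_num, Φm_intCast,
    show ((3 : ℤ)) = ((3 : ℕ) : ℤ) by norm_num, zpow_natCast]

lemma Φm_ofNat4 : Φm 4 = A' ^ 4 := by
  rw [show (4 : ZMod 6) = ((4 : ℤ) : ZMod 6) by norm_num, Φm_intCast,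
    show ((4 : ℤ)) = ((4 : ℕ) : ℤ) by norm_num, zpow_natCast]

lemma ψφ : ψ.comp φ = MonoidHom.id JenniGroup := by
  apply PresentedGroup.ext
  intro x
  show ψ (φ (PresentedGroup.of x)) = PresentedGroup.of x
  rw [φ_of]
  fin_cases x
  · show ψ (DihedralGroup.sr 3) = R'
    show B' * Φm 3 = R'
    rw [Φm_ofNat3, ← lR_BA3]
  · show ψ (DihedralGroup.sr 0) = S'
    show B' * Φm 0 = S'
    rw [Φm_zero, mul_one]
    rfl
  · show ψ (DihedralGroup.r 3) = T'
    show Φm 3 = T'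
    rw [Φm_ofNat3, lA3]
  · show ψ (DihedralGroup.r 4) = U'
    show Φm 4 = U'
    rw [Φm_ofNat4, lA4]

/-- The presented group is isomorphic to the dihedral group of order 12. -/
def jenniEquiv : JenniGroup ≃* DihedralGroup 6 := MonoidHom.toMulEquiv φ ψ ψφ φψ

/-- The group presented by Jenni's erroneous relations is a finite group of
order only 12 (rather than 96). -/
theorem jenniGroup_card : Finite JenniGroup ∧ Nat.card JenniGroup = 12 := by
  have hfin : Finite JenniGroup := Finite.of_equiv _ jenniEquiv.symm.toEquiv
  refine ⟨hfin, ?_⟩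
  rw [Nat.card_congr jenniEquiv.toEquiv, Nat.card_eq_fintype_card, DihedralGroup.card]

end BolzaStmt6
end

section
/- 2·arcosh(2·cos(π/8)/√3) + 2·arcosh((cos(π/8)/sin(π/8))/√3) + 4·arcosh((1/(2·sin(π/8)))) < 2·π·sinh(2·arsinh(1/2)). -/
/-- Real inverse hyperbolic cosine. -/
noncomputable def arcosh (x : ℝ) : ℝ := Real.log (x + Real.sqrt (x ^ 2 - 1))

lemma sqrt2_le : Real.sqrt 2 ≤ 1.4143 := by
  rw [show (1.4143:ℝ) = Real.sqrt (1.4143^2) from (Real.sqrt_sq (by norm_num)).symm]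
  exact Real.sqrt_le_sqrt (by norm_num)

lemma sqrt2_ge : (1.414:ℝ) ≤ Real.sqrt 2 := by
  rw [show (1.414:ℝ) = Real.sqrt (1.414^2) from (Real.sqrt_sq (by norm_num)).symm]
  exact Real.sqrt_le_sqrt (by norm_num)

lemma y_pos (x : ℝ) (hx : 0 ≤ x) (h : 1 ≤ x^2) : 0 < x + Real.sqrt (x^2-1) := by
  have h1 : 1 ≤ x := by nlinarith
  have h2 := Real.sqrt_nonneg (x^2-1)
  linarith

lemma y_le (x q r : ℝ) (hq : 0 ≤ q) (hr : 0 ≤ r) (h1 : x^2 ≤ q^2) (hx : 0 ≤ x)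
    (h2 : x^2 - 1 ≤ r^2) : x + Real.sqrt (x^2 - 1) ≤ q + r := by
  have hxq : x ≤ q := by nlinarith
  have : Real.sqrt (x^2-1) ≤ Real.sqrt (r^2) := Real.sqrt_le_sqrt h2
  rw [Real.sqrt_sq hr] at this
  linarith

set_option maxHeartbeats 1000000 in
/-- The boundary of the annulus `Ω` of area `π` from Section 3.4 is strictly
shorter than the circumference of a hyperbolic disk of area `π`, so `Ω` fails
the isoperimetric inequality. -/
theorem annulus_boundary_lt_disk_circumference :
    2 * arcosh (2 * Real.cos (Real.pi / 8) / Real.sqrt 3) +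
      2 * arcosh ((Real.cos (Real.pi / 8) / Real.sin (Real.pi / 8)) / Real.sqrt 3) +
      4 * arcosh (1 / (2 * Real.sin (Real.pi / 8))) <
    2 * Real.pi * Real.sinh (2 * Real.arsinh (1 / 2)) := by
  have hs2 : Real.sqrt 2 ^ 2 = 2 := Real.sq_sqrt (by norm_num)
  have hs3 : Real.sqrt 3 ^ 2 = 3 := Real.sq_sqrt (by norm_num)
  have hs3pos : (0:ℝ) < Real.sqrt 3 := Real.sqrt_pos.mpr (by norm_num)
  have hu2 : Real.sqrt (2 + Real.sqrt 2) ^ 2 = 2 + Real.sqrt 2 :=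
    Real.sq_sqrt (by positivity)
  have hvnn : (0:ℝ) < Real.sqrt (2 - Real.sqrt 2) := Real.sqrt_pos.mpr (by nlinarith [sqrt2_le])
  have hv2 : Real.sqrt (2 - Real.sqrt 2) ^ 2 = 2 - Real.sqrt 2 :=
    Real.sq_sqrt (by nlinarith [sqrt2_le])
  have hupos : (0:ℝ) < Real.sqrt (2 + Real.sqrt 2) := Real.sqrt_pos.mpr (by positivity)
  set x1 := 2 * Real.cos (Real.pi / 8) / Real.sqrt 3 with hx1def
  set x2 := (Real.cos (Real.pi / 8) / Real.sin (Real.pi / 8)) / Real.sqrt 3 with hx2def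
  set x3 := 1 / (2 * Real.sin (Real.pi / 8)) with hx3def
  have hc := Real.cos_pi_div_eight
  have hsin := Real.sin_pi_div_eight
  -- squares
  have hx1sq : x1 ^ 2 = (2 + Real.sqrt 2) / 3 := by
    rw [hx1def, hc, show 2 * (Real.sqrt (2 + Real.sqrt 2) / 2) = Real.sqrt (2 + Real.sqrt 2) from by ring,
      div_pow, hu2, hs3]
  have hvne : (2:ℝ) - Real.sqrt 2 ≠ 0 := by nlinarith [sqrt2_le]
  have hx2sq : x2 ^ 2 = 1 + 2/3 * Real.sqrt 2 := by
    rw [hx2def, hc, hsin, div_pow, div_pow, div_pow, div_pow, hu2, hv2, hs3]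
    field_simp
    linear_combination (2 : ℝ) * hs2
  have hx3sq : x3 ^ 2 = (2 + Real.sqrt 2) / 2 := by
    rw [hx3def, hsin, show 2 * (Real.sqrt (2 - Real.sqrt 2) / 2) = Real.sqrt (2 - Real.sqrt 2) from by ring,
      div_pow, one_pow, hv2, div_eq_div_iff (by nlinarith [sqrt2_le] : (2:ℝ) - Real.sqrt 2 ≠ 0) (by norm_num : (2:ℝ) ≠ 0)]
    linear_combination hs2
  have hx1pos : 0 ≤ x1 := by rw [hx1def, hc]; positivity
  have hx2pos : 0 ≤ x2 := by rw [hx2def, hc, hsin]; positivity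
  have hx3pos : 0 ≤ x3 := by rw [hx3def, hsin]; positivity
  -- upper bounds for y_i = x_i + sqrt(x_i^2 - 1)
  have hy1 : x1 + Real.sqrt (x1^2 - 1) ≤ 1.45 := by
    have := y_le x1 1.067 0.3717 (by norm_num) (by norm_num)
      (by rw [hx1sq]; linarith [sqrt2_le]) hx1pos
      (by rw [hx1sq]; linarith [sqrt2_le])
    linarith
  have hy2 : x2 + Real.sqrt (x2^2 - 1) ≤ 2.38 := by
    have := y_le x2 1.394 0.9711 (by norm_num) (by norm_num)
      (by rw [hx2sq]; linarith [sqrt2_le]) hx2pos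
      (by rw [hx2sq]; linarith [sqrt2_le])
    linarith
  have hy3 : x3 + Real.sqrt (x3^2 - 1) ≤ 2.16 := by
    have := y_le x3 1.3066 0.841 (by norm_num) (by norm_num)
      (by rw [hx3sq]; linarith [sqrt2_le]) hx3pos
      (by rw [hx3sq]; linarith [sqrt2_le])
    linarith
  -- lower bounds (positivity of y_i)
  have hl1 : 0 < x1 + Real.sqrt (x1^2 - 1) :=
    y_pos x1 hx1pos (by rw [hx1sq]; linarith [sqrt2_ge])
  have hl2 : 0 < x2 + Real.sqrt (x2^2 - 1) :=
    y_pos x2 hx2pos (by rw [hx2sq]; linarith [sqrt2_ge])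
  have hl3 : 0 < x3 + Real.sqrt (x3^2 - 1) :=
    y_pos x3 hx3pos (by rw [hx3sq]; linarith [sqrt2_ge])
  -- bound the logs
  have hlog1 : arcosh x1 ≤ Real.log 1.45 := Real.log_le_log hl1 hy1
  have hlog2 : arcosh x2 ≤ Real.log 2.38 := Real.log_le_log hl2 hy2
  have hlog3 : arcosh x3 ≤ Real.log 2.16 := Real.log_le_log hl3 hy3
  -- RHS = π * √5
  have hrhs : 2 * Real.pi * Real.sinh (2 * Real.arsinh (1 / 2)) = Real.pi * Real.sqrt 5 := by
    rw [Real.sinh_two_mul, Real.sinh_arsinh, Real.cosh_arsinh]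
    rw [show (1:ℝ) + (1/2)^2 = 5/4 by norm_num, Real.sqrt_div (by norm_num : (0:ℝ) ≤ 5) 4,
      show (4:ℝ) = 2^2 by norm_num, Real.sqrt_sq (by norm_num : (0:ℝ) ≤ 2)]
    ring
  rw [hrhs]
  have key : 2 * Real.log 1.45 + 2 * Real.log 2.38 + 4 * Real.log 2.16 < Real.pi * Real.sqrt 5 := by
    have hQ : 2 * Real.log 1.45 + 2 * Real.log 2.38 + 4 * Real.log 2.16
        = Real.log ((1.45:ℝ)^2 * 2.38^2 * 2.16^4) := by
      rw [Real.log_mul (by positivity) (by positivity), Real.log_mul (by positivity) (by positivity),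
        Real.log_pow, Real.log_pow, Real.log_pow]
      push_cast; ring
    rw [hQ]
    have h6 : (6:ℝ) ≤ Real.pi * Real.sqrt 5 := by
      have h5 : (2:ℝ) ≤ Real.sqrt 5 := by
        rw [show (2:ℝ) = Real.sqrt (2^2) from (Real.sqrt_sq (by norm_num)).symm]
        exact Real.sqrt_le_sqrt (by norm_num)
      have := mul_le_mul (le_of_lt Real.pi_gt_three) h5 (by norm_num) (le_of_lt Real.pi_pos)
      linarith
    rw [Real.log_lt_iff_lt_exp (by positivity)]
    have he6 : Real.exp 6 = Real.exp 1 ^ 6 := by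
      rw [← Real.exp_nat_mul]; norm_num
    have : (2.7:ℝ)^6 < Real.exp 1 ^ 6 :=
      pow_lt_pow_left₀ (by linarith [Real.exp_one_gt_d9]) (by norm_num) (by norm_num)
    calc ((1.45:ℝ)^2 * 2.38^2 * 2.16^4) < 2.7^6 := by norm_num
      _ < Real.exp 1 ^ 6 := this
      _ = Real.exp 6 := he6.symm
      _ ≤ Real.exp (Real.pi * Real.sqrt 5) := Real.exp_le_exp.mpr h6
  unfold arcosh at hlog1 hlog2 hlog3 ⊢
  linarith
end

section
/- Define h : ℝ → ℝ by h(t) = (sin((3/4)·t)/((3/4)·t))⁴, and set t₁ = √(116469/28089 − 1/4) and t₂ = √(1408244/252552 − 1/4). Then (32·log 2/9 − (4096/81)·sinh(3/8)⁴ − 3·h(t₁)) / h(t₂) < 8. -/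
open Real

private lemma aux_nonneg {f f' : ℝ → ℝ} (hd : ∀ x, HasDerivAt f (f' x) x)
    (h0 : f 0 = 0) (hf' : ∀ x, 0 ≤ x → 0 ≤ f' x) {x : ℝ} (hx : 0 ≤ x) : 0 ≤ f x := by
  have hmono : MonotoneOn f (Set.Ici 0) := by
    apply monotoneOn_of_deriv_nonneg (convex_Ici 0)
      (fun y _ => (hd y).continuousAt.continuousWithinAt)
      (fun y _ => (hd y).differentiableAt.differentiableWithinAt)
    intro y hy
    rw [interior_Ici] at hy
    rw [(hd y).deriv]
    exact hf' y hy.le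
  have h := hmono Set.self_mem_Ici hx hx
  rw [h0] at h
  exact h

private lemma taylor_sin1 : ∀ x : ℝ, 0 ≤ x → x - x ^ 3 / 6 ≤ Real.sin x := by
  intro x hx
  have hd : ∀ y : ℝ, HasDerivAt (fun y : ℝ => Real.sin y - (y - y ^ 3 / 6))
      (Real.cos y - (1 - y ^ 2 / 2)) y := by
    intro y
    have h := (Real.hasDerivAt_sin y).sub
      ((hasDerivAt_id y).sub ((hasDerivAt_pow 3 y).div_const 6))
    refine h.congr_deriv ?_
    simp
    ring
  have := aux_nonneg hd (by norm_num) (fun y _ => by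
    have := Real.one_sub_sq_div_two_le_cos (x := y); linarith) hx
  linarith [this]

private lemma taylor_cos2 : ∀ x : ℝ, 0 ≤ x → Real.cos x ≤ 1 - x ^ 2 / 2 + x ^ 4 / 24 := by
  intro x hx
  have hd : ∀ y : ℝ, HasDerivAt (fun y : ℝ => 1 - y ^ 2 / 2 + y ^ 4 / 24 - Real.cos y)
      (Real.sin y - (y - y ^ 3 / 6)) y := by
    intro y
    have h := ((((hasDerivAt_const y (1:ℝ)).sub ((hasDerivAt_pow 2 y).div_const 2)).add
      ((hasDerivAt_pow 4 y).div_const 24)).sub (Real.hasDerivAt_cos y))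
    refine h.congr_deriv ?_
    simp
    ring
  have := aux_nonneg hd (by norm_num) (fun y hy => by
    have := taylor_sin1 y hy; linarith) hx
  linarith [this]

private lemma taylor_sin3 : ∀ x : ℝ, 0 ≤ x → Real.sin x ≤ x - x ^ 3 / 6 + x ^ 5 / 120 := by
  intro x hx
  have hd : ∀ y : ℝ, HasDerivAt
      (fun y : ℝ => y - y ^ 3 / 6 + y ^ 5 / 120 - Real.sin y)
      (1 - y ^ 2 / 2 + y ^ 4 / 24 - Real.cos y) y := by
    intro y
    have h := (((hasDerivAt_id y).sub ((hasDerivAt_pow 3 y).div_const 6)).add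
      ((hasDerivAt_pow 5 y).div_const 120)).sub (Real.hasDerivAt_sin y)
    refine h.congr_deriv ?_
    simp
    ring
  have := aux_nonneg hd (by norm_num) (fun y hy => by
    have := taylor_cos2 y hy; linarith) hx
  linarith [this]

private lemma taylor_cos4 : ∀ x : ℝ, 0 ≤ x →
    1 - x ^ 2 / 2 + x ^ 4 / 24 - x ^ 6 / 720 ≤ Real.cos x := by
  intro x hx
  have hd : ∀ y : ℝ, HasDerivAt
      (fun y : ℝ => Real.cos y - (1 - y ^ 2 / 2 + y ^ 4 / 24 - y ^ 6 / 720))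
      ((y - y ^ 3 / 6 + y ^ 5 / 120) - Real.sin y) y := by
    intro y
    have h := (Real.hasDerivAt_cos y).sub
      ((((hasDerivAt_const y (1:ℝ)).sub ((hasDerivAt_pow 2 y).div_const 2)).add
        ((hasDerivAt_pow 4 y).div_const 24)).sub ((hasDerivAt_pow 6 y).div_const 720))
    refine h.congr_deriv ?_
    simp
    ring
  have := aux_nonneg hd (by norm_num) (fun y hy => by
    have := taylor_sin3 y hy; linarith) hx
  linarith [this]

private lemma taylor_sin5 : ∀ x : ℝ, 0 ≤ x →
    x - x ^ 3 / 6 + x ^ 5 / 120 - x ^ 7 / 5040 ≤ Real.sin x := by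
  intro x hx
  have hd : ∀ y : ℝ, HasDerivAt
      (fun y : ℝ => Real.sin y - (y - y ^ 3 / 6 + y ^ 5 / 120 - y ^ 7 / 5040))
      (Real.cos y - (1 - y ^ 2 / 2 + y ^ 4 / 24 - y ^ 6 / 720)) y := by
    intro y
    have h := (Real.hasDerivAt_sin y).sub
      ((((hasDerivAt_id y).sub ((hasDerivAt_pow 3 y).div_const 6)).add
        ((hasDerivAt_pow 5 y).div_const 120)).sub ((hasDerivAt_pow 7 y).div_const 5040))
    refine h.congr_deriv ?_
    simp
    ring
  have := aux_nonneg hd (by norm_num) (fun y hy => by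
    have := taylor_cos4 y hy; linarith) hx
  linarith [this]

/-- Lower bound `sinh (3/8) ≥ 0.3838`. -/
private lemma sinh_three_eighths : (0.3838 : ℝ) ≤ Real.sinh (3 / 8) := by
  have hS : (1.45498 : ℝ) ≤ Real.exp (3 / 8) := by
    have h := Real.sum_le_exp_of_nonneg (x := (3:ℝ)/8) (by norm_num) 6
    have : (∑ i ∈ Finset.range 6, ((3:ℝ)/8) ^ i / (Nat.factorial i : ℝ)) = 1907081 / 1310720 := by
      simp [Finset.sum_range_succ, Nat.factorial]
      norm_num
    rw [this] at h
    linarith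
  have hInv : Real.exp (-(3 / 8)) ≤ (0.687296 : ℝ) := by
    rw [Real.exp_neg]
    have h1 : (0 : ℝ) < 1.45498 := by norm_num
    have := inv_anti₀ h1 hS
    calc (Real.exp (3/8))⁻¹ ≤ (1.45498 : ℝ)⁻¹ := this
      _ ≤ 0.687296 := by norm_num
  rw [Real.sinh_eq]
  linarith

/-- Lower bound for `(sin u / u)` in terms of `u ^ 2`. -/
private lemma ratio_lower (u : ℝ) (hu : 0 < u) (c q : ℝ) (hq : u ^ 2 = q)
    (hc : c ≤ 1 - q / 6 + q ^ 2 / 120 - q ^ 3 / 5040) :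
    c ≤ Real.sin u / u := by
  rw [le_div_iff₀ hu]
  have h5 := taylor_sin5 u hu.le
  have he : u - u ^ 3 / 6 + u ^ 5 / 120 - u ^ 7 / 5040
      = (1 - q / 6 + q ^ 2 / 120 - q ^ 3 / 5040) * u := by
    linear_combination (-(u / 6) + u * (u ^ 2 + q) / 120
      - u * (u ^ 4 + u ^ 2 * q + q ^ 2) / 5040) * hq
  have := mul_le_mul_of_nonneg_right hc hu.le
  linarith

/-- Final numerical inequality in the proof of Theorem 3.22 (the dimension of
the second eigenspace of the Bolza surface is 4): with the trace formula test
function `h(t) = (sin(3t/4)/(3t/4))⁴` and the spectral parameters `t₁, t₂`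
coming from the rigorous upper bounds on `λ₁, λ₂`, the multiplicity bound is
less than 8. -/
theorem bolza_second_eigenspace_multiplicity_bound
    (h : ℝ → ℝ) (hh : ∀ t : ℝ, h t = (Real.sin ((3 / 4) * t) / ((3 / 4) * t)) ^ 4)
    (t₁ t₂ : ℝ)
    (ht₁ : t₁ = Real.sqrt (116469 / 28089 - 1 / 4))
    (ht₂ : t₂ = Real.sqrt (1408244 / 252552 - 1 / 4)) :
    (32 * Real.log 2 / 9 - (4096 / 81) * Real.sinh (3 / 8) ^ 4 - 3 * h t₁) / h t₂
      < 8 := by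
  -- positivity and squares of the spectral parameters
  have ht₁pos : 0 < t₁ := by
    rw [ht₁]; exact Real.sqrt_pos.mpr (by norm_num)
  have ht₂pos : 0 < t₂ := by
    rw [ht₂]; exact Real.sqrt_pos.mpr (by norm_num)
  have ht₁sq : t₁ ^ 2 = 116469 / 28089 - 1 / 4 := by
    rw [ht₁, Real.sq_sqrt (by norm_num)]
  have ht₂sq : t₂ ^ 2 = 1408244 / 252552 - 1 / 4 := by
    rw [ht₂, Real.sq_sqrt (by norm_num)]
  have hu₁ : (0 : ℝ) < 3 / 4 * t₁ := by linarith
  have hu₂ : (0 : ℝ) < 3 / 4 * t₂ := by linarith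
  have hq₁ : (3 / 4 * t₁) ^ 2 = 9 / 16 * (116469 / 28089 - 1 / 4) := by
    rw [mul_pow, ht₁sq]; norm_num
  have hq₂ : (3 / 4 * t₂) ^ 2 = 9 / 16 * (1408244 / 252552 - 1 / 4) := by
    rw [mul_pow, ht₂sq]; norm_num
  -- lower bounds on the sinc ratios
  have hr₁ : (0.6726 : ℝ) ≤ Real.sin (3 / 4 * t₁) / (3 / 4 * t₁) :=
    ratio_lower _ hu₁ _ _ hq₁ (by norm_num)
  have hr₂ : (0.57 : ℝ) ≤ Real.sin (3 / 4 * t₂) / (3 / 4 * t₂) :=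
    ratio_lower _ hu₂ _ _ hq₂ (by norm_num)
  -- lower bounds on h t₁ and h t₂
  have hht₁ : (0.6726 : ℝ) ^ 4 ≤ h t₁ := by
    rw [hh]
    exact pow_le_pow_left₀ (by norm_num) hr₁ 4
  have hht₂ : (0.57 : ℝ) ^ 4 ≤ h t₂ := by
    rw [hh]
    exact pow_le_pow_left₀ (by norm_num) hr₂ 4
  have hht₂pos : 0 < h t₂ := lt_of_lt_of_le (by norm_num) hht₂
  -- sinh bound
  have hsinh : (0.3838 : ℝ) ^ 4 ≤ Real.sinh (3 / 8) ^ 4 :=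
    pow_le_pow_left₀ (by norm_num) sinh_three_eighths 4
  -- log bound
  have hlog := Real.log_two_lt_d9
  -- final arithmetic
  rw [div_lt_iff₀ hht₂pos]
  have hnum : 32 * (0.6931471808 : ℝ) / 9 - 4096 / 81 * (0.3838 : ℝ) ^ 4
      - 3 * (0.6726 : ℝ) ^ 4 < 8 * (0.57 : ℝ) ^ 4 := by norm_num
  nlinarith [hht₁, hht₂, hsinh, hlog, hnum]
end

section
/- Define h : ℝ → ℝ by h(t) = (sin((87/100)·t)/((87/100)·t))⁴, and set t₁ = √(84077/29997 − 1/4). Then (40000·log 2/7569 − (1600000000/57289761)·sinh(87/200)⁴) / h(t₁) < 11. -/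
set_option maxHeartbeats 1000000


/-- Final numerical inequality in the proof of Lemma 4.4 (the multiplicity of
the first positive eigenvalue of the Klein quartic is at most 10): with the
trace formula test function `h(t) = (sin(87t/100)/(87t/100))⁴` and the spectral
parameter `t₁` coming from the rigorous upper bound on `λ₁`, the multiplicity
bound is less than 11. -/
theorem klein_first_eigenvalue_multiplicity_bound
    (h : ℝ → ℝ)
    (hh : ∀ t : ℝ, h t = (Real.sin ((87 / 100) * t) / ((87 / 100) * t)) ^ 4)
    (t₁ : ℝ) (ht₁ : t₁ = Real.sqrt (84077 / 29997 - 1 / 4)) :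
    (40000 * Real.log 2 / 7569 -
        (1600000000 / 57289761) * Real.sinh (87 / 200) ^ 4) / h t₁ < 11 := by
  -- bounds on t₁
  have hc : (84077 / 29997 - 1 / 4 : ℝ) = 306311 / 119988 := by norm_num
  have ht1lo : (1597763 / 1000000 : ℝ) ≤ t₁ := by
    rw [ht₁, hc, Real.le_sqrt (by norm_num) (by norm_num)]; norm_num
  have ht1hi : t₁ ≤ (1597764 / 1000000 : ℝ) := by
    rw [ht₁, hc, Real.sqrt_le_iff]; norm_num
  set x : ℝ := (87 / 100) * t₁ with hxdef
  have hxlo : (139005381 / 100000000 : ℝ) ≤ x := by rw [hxdef]; nlinarith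
  have hxhi : x ≤ (13900547 / 10000000 : ℝ) := by rw [hxdef]; nlinarith
  -- quarter angle y
  set y : ℝ := (139005381 / 400000000 : ℝ) with hydef
  have hy1 : |y| ≤ 1 := by rw [hydef, abs_of_nonneg (by norm_num)]; norm_num
  have hsb := Real.sin_bound hy1
  have hcb := Real.cos_bound hy1
  rw [abs_le] at hsb hcb
  rw [abs_of_nonneg (by rw [hydef]; norm_num : (0:ℝ) ≤ y)] at hsb hcb
  have hslo : (33974 / 100000 : ℝ) ≤ Real.sin y := by rw [hydef] at hsb ⊢; nlinarith [hsb.1]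
  have hshi : Real.sin y ≤ (34128 / 100000 : ℝ) := by rw [hydef] at hsb ⊢; nlinarith [hsb.2]
  have hclo : (93885 / 100000 : ℝ) ≤ Real.cos y := by rw [hydef] at hcb ⊢; nlinarith [hcb.1]
  -- double angle
  have hs2 : (63792 / 100000 : ℝ) ≤ Real.sin (2 * y) := by
    rw [Real.sin_two_mul]; nlinarith
  have hc2 : (76705 / 100000 : ℝ) ≤ Real.cos (2 * y) := by
    have h2m := Real.cos_two_mul y
    have hpyth := Real.sin_sq_add_cos_sq y
    have hsq : Real.sin y ^ 2 ≤ (34128 / 100000 : ℝ) ^ 2 := by nlinarith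
    have hcos' : Real.cos (2 * y) = 1 - 2 * Real.sin y ^ 2 := by linarith
    rw [hcos']; nlinarith
  have hs4 : (97863 / 100000 : ℝ) ≤ Real.sin (4 * y) := by
    have h4 : (4 : ℝ) * y = 2 * (2 * y) := by ring
    rw [h4, Real.sin_two_mul]
    have hs2hi : Real.sin (2 * y) ≤ 1 := Real.sin_le_one _
    nlinarith
  have hxy : (4 : ℝ) * y = 139005381 / 100000000 := by rw [hydef]; norm_num
  -- sin x ≥ sin (4y) by monotonicity on [-π/2, π/2]
  have hpi : (3 : ℝ) < Real.pi := Real.pi_gt_three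
  have hmem1 : (4 : ℝ) * y ∈ Set.Icc (-(Real.pi / 2)) (Real.pi / 2) := by
    constructor <;> rw [hxy] <;> nlinarith
  have hmem2 : x ∈ Set.Icc (-(Real.pi / 2)) (Real.pi / 2) := by
    constructor <;> nlinarith
  have hsinx : Real.sin (4 * y) ≤ Real.sin x := by
    rcases eq_or_lt_of_le (hxy ▸ hxlo : (4:ℝ) * y ≤ x) with he | hlt
    · rw [he]
    · exact le_of_lt (Real.strictMonoOn_sin hmem1 hmem2 hlt)
  have hsinxlo : (97863 / 100000 : ℝ) ≤ Real.sin x := le_trans hs4 hsinx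
  -- lower bound on h t₁
  have hxpos : (0 : ℝ) < x := by nlinarith
  have hratio : (97863 / 100000 : ℝ) / (13900547 / 10000000) ≤ Real.sin x / x :=
    div_le_div₀ (by linarith) hsinxlo hxpos hxhi
  have hrpos : (0 : ℝ) ≤ (97863 / 100000 : ℝ) / (13900547 / 10000000) := by norm_num
  have hht : ((97863 / 100000 : ℝ) / (13900547 / 10000000)) ^ 4 ≤ h t₁ := by
    rw [hh t₁]; exact pow_le_pow_left₀ hrpos hratio 4
  have hhlb : (2456 / 10000 : ℝ) ≤ h t₁ := by
    refine le_trans ?_ hht; norm_num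
  have hhpos : (0 : ℝ) < h t₁ := by linarith
  rw [div_lt_iff₀ hhpos]
  -- bounds on log 2 and sinh
  have hlog : Real.log 2 < 0.6931471808 := Real.log_two_lt_d9
  have hsinh : (87 / 200 : ℝ) ≤ Real.sinh (87 / 200) :=
    Real.self_le_sinh_iff.mpr (by norm_num)
  have hsinh4 : ((87 / 200 : ℝ)) ^ 4 ≤ Real.sinh (87 / 200) ^ 4 :=
    pow_le_pow_left₀ (by norm_num) hsinh 4
  nlinarith [hsinh4, hlog, hhlb]
end

section
/- Define p : ℝ → ℝ by p(x) = 15479/16384 − (8035/36864)·x + (109/9216)·x² − (1/2304)·x³. Then p(23/4) = 0, and p(x) > 0 for every x with 0 ≤ x < 23/4. (Equivalently, the sextic polynomial f₃(t) = p(t²) = −t⁶/2304 + 109t⁴/9216 − 8035t²/36864 + 15479/16384 has √23/2 as its first positive zero.) -/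
/-- The cubic `p(x) = 15479/16384 − (8035/36864)x + (109/9216)x² − (1/2304)x³`
(so that `f₃(t) = p(t²)` is the third partial sum of the hypergeometric series
for `P₋ₛ(3/2)`) vanishes at `x = 23/4` and is strictly positive on `[0, 23/4)`;
equivalently, `√23/2` is the first positive zero of `f₃`. -/
theorem cubic_first_root
    (p : ℝ → ℝ)
    (hp : ∀ x : ℝ, p x =
      15479 / 16384 - (8035 / 36864) * x + (109 / 9216) * x ^ 2
        - (1 / 2304) * x ^ 3) :
    p (23 / 4) = 0 ∧ ∀ x : ℝ, 0 ≤ x → x < 23 / 4 → 0 < p x := by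
  refine ⟨by rw [hp]; norm_num, fun x hx hx' => ?_⟩
  rw [hp]
  have hq : 0 < 16 * x ^ 2 - 344 * x + 6057 := by nlinarith [sq_nonneg (4 * x - 43)]
  nlinarith [mul_pos (by linarith : (0:ℝ) < 23 - 4 * x) hq]
end
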